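/- arXiv:1110.4319 — 4 statements merged into one kernel-verified Lean document; each statement's English description precedes it below -/
import Mathlib

section
/- Let a_1,...,a_t and b_1,...,b_t be nonnegative reals with a_i < A, b_i < B for all i, sum a_i ≤ S, sum b_i ≤ T, and such that for all i ≠ j, either a_i + a_j > A or b_i + b_j > B. Then t < S/A + T/B + max(S/A, T/B, 1). -/
open Finset

private lemma sum_s_eq (t : ℕ) (α β : Fin t → ℝ) :
    ∑ i, (2 * α i + β i - 1) = 2 * ∑ i, α i + ∑ i, β i - t := by
  rw [Finset.sum_sub_distrib, Finset.sum_add_distrib, ← Finset.mul_sum]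
  simp [Finset.card_univ]

private lemma pair_pos {t : ℕ} {α β : Fin t → ℝ}
    (hα0 : ∀ i, 0 ≤ α i) (hβ0 : ∀ i, 0 ≤ β i)
    (hpair : ∀ i j, i ≠ j → 1 < α i + α j ∨ 1 < β i + β j)
    {i j : Fin t} (hne : j ≠ i) (hi : (1:ℝ)/2 ≤ α i) :
    0 < (2 * α i + β i - 1) + (2 * α j + β j - 1) := by
  rcases hpair j i hne with h | h
  · linarith [hβ0 i, hβ0 j]
  · linarith [hα0 j]

private lemma key_half (t : ℕ) (α β : Fin t → ℝ)
    (hα0 : ∀ i, 0 ≤ α i) (hβ0 : ∀ i, 0 ≤ β i)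
    (hpair : ∀ i j, i ≠ j → 1 < α i + α j ∨ 1 < β i + β j)
    (ht : 2 ≤ t)
    (hcard : t ≤ 2 * (univ.filter (fun i => (1:ℝ)/2 ≤ α i)).card) :
    (t : ℝ) < 2 * ∑ i, α i + ∑ i, β i := by
  set s : Fin t → ℝ := fun i => 2 * α i + β i - 1 with hs_def
  set A' : Finset (Fin t) := univ.filter (fun i => (1:ℝ)/2 ≤ α i) with hA'_def
  have hmemA' : ∀ i ∈ A', (1:ℝ)/2 ≤ α i := by
    intro i hi; exact (Finset.mem_filter.1 hi).2
  have hL1 : ∀ i ∈ A', 0 ≤ s i := by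
    intro i hi
    have h := hmemA' i hi
    have := hβ0 i
    simp only [hs_def]
    linarith
  have hpos : 0 < ∑ i, s i := by
    by_cases hC : A'ᶜ = ∅
    · have hAu : A' = univ := by
        rwa [Finset.compl_eq_empty_iff] at hC
      have hall : ∀ j : Fin t, j ∈ A' := by
        intro j; rw [hAu]; exact Finset.mem_univ j
      have h0 : (0 : ℕ) < t := by omega
      have h1 : (1 : ℕ) < t := by omega
      set i₀ : Fin t := ⟨0, h0⟩
      set j₀ : Fin t := ⟨1, h1⟩
      have hne : j₀ ≠ i₀ := by
        intro h
        have := congrArg Fin.val h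
        simp [i₀, j₀] at this
      have hp : 0 < s i₀ + s j₀ :=
        pair_pos hα0 hβ0 hpair hne (hmemA' i₀ (hall i₀))
      have hj₀mem : j₀ ∈ (univ : Finset (Fin t)).erase i₀ :=
        Finset.mem_erase.2 ⟨hne, Finset.mem_univ _⟩
      have e1 : ∑ i, s i = s i₀ + ∑ i ∈ (univ : Finset (Fin t)).erase i₀, s i :=
        (Finset.add_sum_erase _ s (Finset.mem_univ i₀)).symm
      have e2 : ∑ i ∈ (univ : Finset (Fin t)).erase i₀, s i
          = s j₀ + ∑ i ∈ ((univ : Finset (Fin t)).erase i₀).erase j₀, s i :=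
        (Finset.add_sum_erase _ s hj₀mem).symm
      have e3 : 0 ≤ ∑ i ∈ ((univ : Finset (Fin t)).erase i₀).erase j₀, s i :=
        Finset.sum_nonneg (fun i _ => hL1 i (hall i))
      linarith [e1, e2, e3, hp]
    · have hCne : A'ᶜ.Nonempty := Finset.nonempty_iff_ne_empty.2 hC
      have hA'ne : A'.Nonempty := Finset.card_pos.mp (by omega)
      have hprod : 0 < ∑ i ∈ A', ∑ j ∈ A'ᶜ, (s i + s j) := by
        apply Finset.sum_pos _ hA'ne
        intro i hi
        apply Finset.sum_pos _ hCne
        intro j hj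
        have hji : j ≠ i := by
          intro h
          exact (Finset.mem_compl.1 hj) (h ▸ hi)
        exact pair_pos hα0 hβ0 hpair hji (hmemA' i hi)
      have hexp : ∑ i ∈ A', ∑ j ∈ A'ᶜ, (s i + s j)
          = (A'ᶜ.card : ℝ) * ∑ i ∈ A', s i + (A'.card : ℝ) * ∑ j ∈ A'ᶜ, s j := by
        have h1 : ∀ i, ∑ j ∈ A'ᶜ, (s i + s j)
            = (A'ᶜ.card : ℝ) * s i + ∑ j ∈ A'ᶜ, s j := by
          intro i
          rw [Finset.sum_add_distrib, Finset.sum_const, nsmul_eq_mul]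
        rw [Finset.sum_congr rfl (fun i _ => h1 i), Finset.sum_add_distrib,
          Finset.sum_const, nsmul_eq_mul, ← Finset.mul_sum]
      have hSA : 0 ≤ ∑ i ∈ A', s i := Finset.sum_nonneg hL1
      have hcards : A'.card + A'ᶜ.card = t := by
        rw [Finset.card_add_card_compl, Fintype.card_fin]
      have hsum : ∑ i, s i = ∑ i ∈ A', s i + ∑ i ∈ A'ᶜ, s i :=
        (Finset.sum_add_sum_compl A' s).symm
      have hcA : (0:ℝ) < A'.card := by
        exact_mod_cast Finset.card_pos.2 hA'ne
      have hge : (A'ᶜ.card : ℝ) ≤ (A'.card : ℝ) := by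
        have : A'ᶜ.card ≤ A'.card := by omega
        exact_mod_cast this
      rw [hsum]
      by_contra hcon
      push_neg at hcon
      have hSC : ∑ j ∈ A'ᶜ, s j ≤ -∑ i ∈ A', s i := by linarith
      rw [hexp] at hprod
      nlinarith [mul_nonneg (by linarith : (0:ℝ) ≤ (A'.card : ℝ) - (A'ᶜ.card : ℝ)) hSA]
  have := sum_s_eq t α β
  simp only [hs_def] at hpos
  linarith

private lemma key (t : ℕ) (α β : Fin t → ℝ)
    (hα0 : ∀ i, 0 ≤ α i) (hβ0 : ∀ i, 0 ≤ β i)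
    (hpair : ∀ i j, i ≠ j → 1 < α i + α j ∨ 1 < β i + β j)
    (ht : 2 ≤ t) :
    (t : ℝ) < 2 * ∑ i, α i + ∑ i, β i ∨ (t : ℝ) < ∑ i, α i + 2 * ∑ i, β i := by
  by_cases h1 : t ≤ 2 * (univ.filter (fun i => (1:ℝ)/2 ≤ α i)).card
  · exact Or.inl (key_half t α β hα0 hβ0 hpair ht h1)
  by_cases h2 : t ≤ 2 * (univ.filter (fun i => (1:ℝ)/2 ≤ β i)).card
  · right
    have := key_half t β α hβ0 hα0 (fun i j hij => (hpair i j hij).symm) ht h2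
    linarith
  -- triple case
  left
  push_neg at h1 h2
  set s : Fin t → ℝ := fun i => 2 * α i + β i - 1 with hs_def
  set A' : Finset (Fin t) := univ.filter (fun i => (1:ℝ)/2 ≤ α i) with hA'_def
  set B' : Finset (Fin t) := univ.filter (fun i => (1:ℝ)/2 ≤ β i) with hB'_def
  have hmemA' : ∀ i ∈ A', (1:ℝ)/2 ≤ α i := fun i hi => (Finset.mem_filter.1 hi).2
  have hmemB' : ∀ i ∈ B', (1:ℝ)/2 ≤ β i := fun i hi => (Finset.mem_filter.1 hi).2
  have hnotA' : ∀ i, i ∉ A' → α i < 1/2 := by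
    intro i hi
    by_contra h
    push_neg at h
    exact hi (Finset.mem_filter.2 ⟨Finset.mem_univ i, h⟩)
  have hnotB' : ∀ i, i ∉ B' → β i < 1/2 := by
    intro i hi
    by_contra h
    push_neg at h
    exact hi (Finset.mem_filter.2 ⟨Finset.mem_univ i, h⟩)
  have hsmall : ∀ e ∈ (A' ∪ B')ᶜ, α e < 1/2 ∧ β e < 1/2 := by
    intro e he
    have := Finset.mem_compl.1 he
    rw [Finset.mem_union] at this
    push_neg at this
    exact ⟨hnotA' e this.1, hnotB' e this.2⟩
  have hC1 : ((A' ∪ B')ᶜ).card ≤ 1 := by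
    rw [Finset.card_le_one]
    intro i hi j hj
    by_contra hne
    rcases hpair i j hne with h | h
    · have h1' := (hsmall i hi).1
      have h2' := (hsmall j hj).1
      linarith
    · have h1' := (hsmall i hi).2
      have h2' := (hsmall j hj).2
      linarith
  have hunion_card : (A' ∪ B').card + ((A' ∪ B')ᶜ).card = t := by
    rw [Finset.card_add_card_compl, Fintype.card_fin]
  have hle : (A' ∪ B').card ≤ A'.card + B'.card := Finset.card_union_le _ _
  have hcAB : A'.card = B'.card := by omega
  have hCcard : ((A' ∪ B')ᶜ).card = 1 := by omega
  have hUcard : (A' ∪ B').card = A'.card + B'.card := by omega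
  have hinter : A' ∩ B' = ∅ := by
    have := Finset.card_union_add_card_inter A' B'
    have h0 : (A' ∩ B').card = 0 := by omega
    exact Finset.card_eq_zero.1 h0
  have hdisj : Disjoint A' B' := Finset.disjoint_iff_inter_eq_empty.2 hinter
  have hA'ne : A'.Nonempty := Finset.card_pos.mp (by omega)
  have hB'ne : B'.Nonempty := Finset.card_pos.mp (by omega)
  obtain ⟨i₀, hi₀⟩ := hA'ne
  obtain ⟨j₀, hj₀⟩ := hB'ne
  obtain ⟨e, hCe⟩ := Finset.card_eq_one.1 hCcard
  have he : e ∈ (A' ∪ B')ᶜ := by rw [hCe]; exact Finset.mem_singleton_self e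
  have hαe : α e < 1/2 := (hsmall e he).1
  have hβe : β e < 1/2 := (hsmall e he).2
  have hαi₀ : (1:ℝ)/2 ≤ α i₀ := hmemA' i₀ hi₀
  have hβj₀ : (1:ℝ)/2 ≤ β j₀ := hmemB' j₀ hj₀
  have hi₀B : i₀ ∉ B' := by
    intro h
    have : i₀ ∈ A' ∩ B' := Finset.mem_inter.2 ⟨hi₀, h⟩
    rw [hinter] at this
    exact absurd this (Finset.notMem_empty _)
  have hj₀A : j₀ ∉ A' := by
    intro h
    have : j₀ ∈ A' ∩ B' := Finset.mem_inter.2 ⟨h, hj₀⟩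
    rw [hinter] at this
    exact absurd this (Finset.notMem_empty _)
  have hβi₀ : β i₀ < 1/2 := hnotB' i₀ hi₀B
  have hαj₀ : α j₀ < 1/2 := hnotA' j₀ hj₀A
  have hei : e ≠ i₀ := by
    intro h
    exact (Finset.mem_compl.1 he) (Finset.mem_union_left _ (h ▸ hi₀))
  have hej : e ≠ j₀ := by
    intro h
    exact (Finset.mem_compl.1 he) (Finset.mem_union_right _ (h ▸ hj₀))
  have hred : 1 < α e + α i₀ := by
    rcases hpair e i₀ hei with h | h
    · exact h
    · exfalso; linarith
  have hblue : 1 < β e + β j₀ := by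
    rcases hpair e j₀ hej with h | h
    · exfalso; linarith
    · exact h
  have htr : 0 < s e + s i₀ + s j₀ := by
    simp only [hs_def]
    linarith [hα0 j₀, hβ0 i₀]
  -- the rest: product argument on A'.erase i₀ × B'.erase j₀
  have hL2 : ∀ i ∈ A'.erase i₀, ∀ j ∈ B'.erase j₀, 0 < s i + s j := by
    intro i hi j hj
    have hiA : i ∈ A' := Finset.mem_of_mem_erase hi
    have hjB : j ∈ B' := Finset.mem_of_mem_erase hj
    have hji : j ≠ i := by
      intro h
      have : i ∈ A' ∩ B' := Finset.mem_inter.2 ⟨hiA, h ▸ hjB⟩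
      rw [hinter] at this
      exact absurd this (Finset.notMem_empty _)
    exact pair_pos hα0 hβ0 hpair hji (hmemA' i hiA)
  have hrest : 0 ≤ ∑ i ∈ A'.erase i₀, s i + ∑ j ∈ B'.erase j₀, s j := by
    have hm : (A'.erase i₀).card = (B'.erase j₀).card := by
      rw [Finset.card_erase_of_mem hi₀, Finset.card_erase_of_mem hj₀, hcAB]
    rcases Nat.eq_zero_or_pos (A'.erase i₀).card with hz | hp
    · have hAe : A'.erase i₀ = ∅ := Finset.card_eq_zero.1 hz
      have hBe : B'.erase j₀ = ∅ := Finset.card_eq_zero.1 (by omega)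
      simp [hAe, hBe]
    · have hQ : 0 ≤ ∑ i ∈ A'.erase i₀, ∑ j ∈ B'.erase j₀, (s i + s j) :=
        Finset.sum_nonneg fun i hi => Finset.sum_nonneg fun j hj => (hL2 i hi j hj).le
      have hexp : ∑ i ∈ A'.erase i₀, ∑ j ∈ B'.erase j₀, (s i + s j)
          = ((B'.erase j₀).card : ℝ) * ∑ i ∈ A'.erase i₀, s i
            + ((A'.erase i₀).card : ℝ) * ∑ j ∈ B'.erase j₀, s j := by
        have h1 : ∀ i, ∑ j ∈ B'.erase j₀, (s i + s j)
            = ((B'.erase j₀).card : ℝ) * s i + ∑ j ∈ B'.erase j₀, s j := by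
          intro i
          rw [Finset.sum_add_distrib, Finset.sum_const, nsmul_eq_mul]
        rw [Finset.sum_congr rfl (fun i _ => h1 i), Finset.sum_add_distrib,
          Finset.sum_const, nsmul_eq_mul, ← Finset.mul_sum]
      rw [hexp, ← hm] at hQ
      have hmpos : (0:ℝ) < ((A'.erase i₀).card : ℝ) := by exact_mod_cast hp
      nlinarith [hQ, hmpos]
  have hsplit : ∑ i, s i = (∑ i ∈ A' ∪ B', s i) + ∑ i ∈ (A' ∪ B')ᶜ, s i :=
    (Finset.sum_add_sum_compl (A' ∪ B') s).symm
  have hCsum : ∑ i ∈ (A' ∪ B')ᶜ, s i = s e := by rw [hCe, Finset.sum_singleton]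
  have hUsum : ∑ i ∈ A' ∪ B', s i = ∑ i ∈ A', s i + ∑ i ∈ B', s i :=
    Finset.sum_union hdisj
  have hA'sum : ∑ i ∈ A', s i = s i₀ + ∑ i ∈ A'.erase i₀, s i :=
    (Finset.add_sum_erase _ s hi₀).symm
  have hB'sum : ∑ i ∈ B', s i = s j₀ + ∑ i ∈ B'.erase j₀, s i :=
    (Finset.add_sum_erase _ s hj₀).symm
  have hpos : 0 < ∑ i, s i := by
    rw [hsplit, hCsum, hUsum, hA'sum, hB'sum]
    linarith
  have := sum_s_eq t α β
  simp only [hs_def] at hpos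
  linarith

theorem stmt_0 (t : ℕ) (a b : Fin t → ℝ) (A B S T : ℝ)
    (hA : 0 < A) (hB : 0 < B) (hS : 0 < S) (hT : 0 < T)
    (ha0 : ∀ i, 0 ≤ a i) (hb0 : ∀ i, 0 ≤ b i)
    (haA : ∀ i, a i < A) (hbB : ∀ i, b i < B)
    (hsa : ∑ i, a i ≤ S) (hsb : ∑ i, b i ≤ T)
    (hpair : ∀ i j, i ≠ j → A < a i + a j ∨ B < b i + b j) :
    (t : ℝ) < S / A + T / B + max (S / A) (max (T / B) 1) := by
  have hx : 0 < S / A := div_pos hS hA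
  have hy : 0 < T / B := div_pos hT hB
  have hmax1 : (1:ℝ) ≤ max (S/A) (max (T/B) 1) :=
    le_max_of_le_right (le_max_right _ _)
  rcases Nat.lt_or_ge t 2 with ht | ht
  · interval_cases t
    · push_cast; linarith
    · push_cast; linarith
  · have hpair' : ∀ i j : Fin t, i ≠ j →
        1 < a i / A + a j / A ∨ 1 < b i / B + b j / B := by
      intro i j hij
      rcases hpair i j hij with h | h
      · left; rw [← add_div]; exact (one_lt_div hA).2 h
      · right; rw [← add_div]; exact (one_lt_div hB).2 h
    have hα0 : ∀ i, 0 ≤ a i / A := fun i => div_nonneg (ha0 i) hA.le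
    have hβ0 : ∀ i, 0 ≤ b i / B := fun i => div_nonneg (hb0 i) hB.le
    have hσ : ∑ i, a i / A ≤ S / A := by
      rw [← Finset.sum_div]
      gcongr
    have hτ : ∑ i, b i / B ≤ T / B := by
      rw [← Finset.sum_div]
      gcongr
    have hxm : S / A ≤ max (S/A) (max (T/B) 1) := le_max_left _ _
    have hym : T / B ≤ max (S/A) (max (T/B) 1) :=
      le_max_of_le_right (le_max_left _ _)
    rcases key t (fun i => a i / A) (fun i => b i / B) hα0 hβ0 hpair' ht with h | h
    · linarith
    · linarith
end

section
/- Let P be a partition of the vertex set V of an edge-weighted graph G into sets P_1,...,P_m with P_i ⊆ S_i for given sets S_i. Fix i, and replace the partition by P_i' = S_i and P_j' = P_j \ S_i for j ≠ i. Then sum_j δ(P_j') ≤ sum_j δ(P_j) + 2δ(S_i) − 2δ(P_i), where δ(S) denotes the total weight of edges with exactly one endpoint in S. In particular, if δ(P_i) > δ(S_i) + B then the total boundary decreases by more than 2B. -/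
/-- The total weight of edges leaving the set `A` (each crossing pair counted
once, ordered from inside `A` to outside). -/
def cutw {V : Type*} [Fintype V] [DecidableEq V] (w : V → V → ℝ) (A : Finset V) : ℝ :=
  ∑ u ∈ A, ∑ v ∈ Aᶜ, w u v

section Aux

variable {V : Type*} [Fintype V] [DecidableEq V] (w : V → V → ℝ)

/-- Weight between two sets. -/
def cw (X Y : Finset V) : ℝ := ∑ u ∈ X, ∑ v ∈ Y, w u v

lemma cutw_eq (A : Finset V) : cutw w A = cw w A Aᶜ := rfl

lemma cw_left_split {B A : Finset V} (h : B ⊆ A) (Y : Finset V) :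
    cw w A Y = cw w B Y + cw w (A \ B) Y := by
  rw [cw, cw, cw, ← Finset.sum_union Finset.sdiff_disjoint.symm,
    Finset.union_sdiff_of_subset h]

lemma cw_right_split {B A : Finset V} (h : B ⊆ A) (X : Finset V) :
    cw w X A = cw w X B + cw w X (A \ B) := by
  unfold cw
  rw [← Finset.sum_add_distrib]
  exact Finset.sum_congr rfl fun u _ => by
    rw [← Finset.sum_union Finset.sdiff_disjoint.symm, Finset.union_sdiff_of_subset h]

lemma cw_symm (hwsym : ∀ u v, w u v = w v u) (X Y : Finset V) : cw w X Y = cw w Y X := by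
  rw [cw, Finset.sum_comm]
  exact Finset.sum_congr rfl fun v _ => Finset.sum_congr rfl fun u _ => hwsym u v

lemma cw_mono (hw : ∀ u v, 0 ≤ w u v) {X X' Y Y' : Finset V} (hX : X ⊆ X') (hY : Y ⊆ Y') :
    cw w X Y ≤ cw w X' Y' := by
  refine le_trans (Finset.sum_le_sum fun u _ =>
    Finset.sum_le_sum_of_subset_of_nonneg hY fun v _ _ => hw u v) ?_
  exact Finset.sum_le_sum_of_subset_of_nonneg hX fun u _ _ =>
    Finset.sum_nonneg fun v _ => hw u v

end Aux

theorem stmt_5 {V : Type*} [Fintype V] [DecidableEq V]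
    (w : V → V → ℝ) (hw : ∀ u v, 0 ≤ w u v) (hwsym : ∀ u v, w u v = w v u)
    (m : ℕ) (P S : Fin m → Finset V)
    (hsub : ∀ j, P j ⊆ S j)
    (hdisj : ∀ j j', j ≠ j' → Disjoint (P j) (P j'))
    (hcover : Finset.univ.biUnion P = Finset.univ)
    (i : Fin m) :
    (∑ j, cutw w (if j = i then S i else P j \ S i))
      ≤ (∑ j, cutw w (P j)) + 2 * cutw w (S i) - 2 * cutw w (P i) := by
  classical
  set A : Finset V := S i with hA
  have hBA : P i ⊆ A := hsub i
  set Q : Fin m → Finset V := fun j => P j ∩ A with hQdef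
  -- the parts other than i, intersected with A, partition A \ P i
  have hbi : (Finset.univ.erase i).biUnion Q = A \ P i := by
    ext v
    simp only [Finset.mem_biUnion, Finset.mem_erase, Finset.mem_inter, Finset.mem_sdiff,
      Finset.mem_univ, true_and, and_true, hQdef]
    constructor
    · rintro ⟨j, hji, hvP, hvA⟩
      exact ⟨hvA, fun hvB => Finset.disjoint_left.mp (hdisj j i hji) hvP hvB⟩
    · rintro ⟨hvA, hvB⟩
      have hv : v ∈ Finset.univ.biUnion P := hcover ▸ Finset.mem_univ v
      obtain ⟨j, -, hvP⟩ := Finset.mem_biUnion.mp hv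
      exact ⟨j, fun h => hvB (h ▸ hvP), hvP, hvA⟩
  have hpd : Set.PairwiseDisjoint ((Finset.univ.erase i : Finset (Fin m)) : Set (Fin m)) Q := by
    intro j _ j' _ hne
    exact Finset.disjoint_left.mpr fun v hv hv' =>
      Finset.disjoint_left.mp (hdisj j j' hne) (Finset.mem_inter.mp hv).1
        (Finset.mem_inter.mp hv').1
  have hsumB : ∑ j ∈ Finset.univ.erase i, cw w (Q j) (P i) = cw w (A \ P i) (P i) := by
    rw [← hbi]; unfold cw; rw [Finset.sum_biUnion hpd]
  have hsumC : ∑ j ∈ Finset.univ.erase i, cw w (Q j) Aᶜ = cw w (A \ P i) Aᶜ := by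
    rw [← hbi]; unfold cw; rw [Finset.sum_biUnion hpd]
  -- per-part bound
  have hkey : ∀ j ∈ Finset.univ.erase i,
      cutw w (P j \ A) ≤ cutw w (P j) + cw w (Q j) Aᶜ - cw w (Q j) (P i) := by
    intro j hj
    have hji : j ≠ i := Finset.ne_of_mem_erase hj
    have h2 : (P j)ᶜ ⊆ (P j \ A)ᶜ := by
      intro v hv
      simp only [Finset.mem_compl, Finset.mem_sdiff] at hv ⊢
      tauto
    have h1 : (P j \ A)ᶜ \ (P j)ᶜ = Q j := by
      ext v
      simp only [Finset.mem_sdiff, Finset.mem_compl, Finset.mem_inter, hQdef, not_not]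
      tauto
    have e1 : cutw w (P j \ A) = cw w (P j \ A) (P j)ᶜ + cw w (P j \ A) (Q j) := by
      rw [cutw_eq, cw_right_split w h2, h1]
    have e2 : cutw w (P j) = cw w (Q j) (P j)ᶜ + cw w (P j \ A) (P j)ᶜ := by
      rw [cutw_eq, cw_left_split w (Finset.inter_subset_left : Q j ⊆ P j) ((P j)ᶜ)]
      congr 2
      show P j \ (P j ∩ A) = P j \ A
      exact Finset.sdiff_inter_self_left (P j) A
    have b1 : cw w (P j \ A) (Q j) ≤ cw w (Q j) Aᶜ := by
      rw [cw_symm w hwsym]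
      refine cw_mono w hw le_rfl ?_
      intro v hv
      simp only [Finset.mem_sdiff] at hv
      simpa using hv.2
    have b2 : cw w (Q j) (P i) ≤ cw w (Q j) ((P j)ᶜ) := by
      refine cw_mono w hw le_rfl ?_
      intro v hv
      simp only [Finset.mem_compl]
      exact fun hvj => Finset.disjoint_left.mp (hdisj j i hji) hvj hv
    linarith
  have hsum : ∑ j ∈ Finset.univ.erase i, cutw w (P j \ A)
      ≤ (∑ j ∈ Finset.univ.erase i, cutw w (P j))
        + cw w (A \ P i) Aᶜ - cw w (A \ P i) (P i) := by
    calc ∑ j ∈ Finset.univ.erase i, cutw w (P j \ A)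
        ≤ ∑ j ∈ Finset.univ.erase i,
            (cutw w (P j) + cw w (Q j) Aᶜ - cw w (Q j) (P i)) := Finset.sum_le_sum hkey
      _ = (∑ j ∈ Finset.univ.erase i, cutw w (P j))
            + (∑ j ∈ Finset.univ.erase i, cw w (Q j) Aᶜ)
            - (∑ j ∈ Finset.univ.erase i, cw w (Q j) (P i)) := by
          rw [Finset.sum_sub_distrib, Finset.sum_add_distrib]
      _ = _ := by rw [hsumB, hsumC]
  -- split the two big sums at i
  have hL : (∑ j, cutw w (if j = i then S i else P j \ S i))
      = cutw w A + ∑ j ∈ Finset.univ.erase i, cutw w (P j \ A) := by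
    rw [← Finset.add_sum_erase _ _ (Finset.mem_univ i), if_pos rfl]
    congr 1
    exact Finset.sum_congr rfl fun j hj => by rw [if_neg (Finset.ne_of_mem_erase hj)]
  have hR : (∑ j, cutw w (P j)) = cutw w (P i) + ∑ j ∈ Finset.univ.erase i, cutw w (P j) :=
    (Finset.add_sum_erase _ _ (Finset.mem_univ i)).symm
  -- the exact identity relating the correction terms
  have hAeq : cutw w A = cw w (P i) Aᶜ + cw w (A \ P i) Aᶜ := by
    rw [cutw_eq]; exact cw_left_split w hBA _
  have hcompl : (P i)ᶜ \ Aᶜ = A \ P i := by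
    ext v
    simp only [Finset.mem_sdiff, Finset.mem_compl, not_not]
    tauto
  have hAc : Aᶜ ⊆ (P i)ᶜ := by
    intro v hv
    simp only [Finset.mem_compl] at hv ⊢
    exact fun h => hv (hBA h)
  have hBeq : cutw w (P i) = cw w (P i) Aᶜ + cw w (P i) (A \ P i) := by
    rw [cutw_eq, cw_right_split w hAc, hcompl]
  have hswap : cw w (P i) (A \ P i) = cw w (A \ P i) (P i) := cw_symm w hwsym _ _
  rw [hL, hR]
  linarith
end

section
/- Suppose every vertex of a graph G = (V,E) is covered by at least a c/k fraction of sets in a multiset 𝒮, each set S ∈ 𝒮 satisfying δ(S) ≤ B. Order 𝒮 uniformly at random as S_1, ..., S_m and define P_i = S_i \ (S_1 ∪ ... ∪ S_{i−1}). Then for each i, the expected weight of edges between P_i and the union of later parts satisfies E[w(E(P_i, ∪_{j>i} P_j))] ≤ (1 − c/k)^{i−1} · B. Consequently E[∑_i δ(P_i)] ≤ 2kB/c. -/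
open Classical

namespace Stmt6Aux

open Finset Equiv

variable {m : ℕ}

def Av (Bad : Finset (Fin m)) (i : ℕ) : Finset (Equiv.Perm (Fin m)) :=
  Finset.univ.filter (fun σ => ∀ j : Fin m, (j : ℕ) < i → σ j ∉ Bad)

def Cnt (Bad : Finset (Fin m)) (i : ℕ) (p x : Fin m) : ℕ :=
  ((Av Bad i).filter (fun σ => σ p = x)).card

lemma mem_Av {Bad : Finset (Fin m)} {i : ℕ} {σ : Equiv.Perm (Fin m)} :
    σ ∈ Av Bad i ↔ ∀ j : Fin m, (j : ℕ) < i → σ j ∉ Bad := by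
  simp [Av]

lemma cnt_swap_value {Bad : Finset (Fin m)} {i : ℕ} {p x y : Fin m}
    (h : ∀ z : Fin m, z ∉ Bad → Equiv.swap x y z ∉ Bad) :
    Cnt Bad i p x = Cnt Bad i p y := by
  apply Finset.card_nbij' (fun σ => Equiv.swap x y * σ) (fun σ => Equiv.swap x y * σ)
  · intro σ hσ
    rw [Finset.mem_coe, Finset.mem_filter, mem_Av] at hσ ⊢
    refine ⟨fun j hj => ?_, ?_⟩
    · simpa [Equiv.Perm.mul_apply] using h _ (hσ.1 j hj)
    · simp [Equiv.Perm.mul_apply, hσ.2]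
  · intro σ hσ
    rw [Finset.mem_coe, Finset.mem_filter, mem_Av] at hσ ⊢
    refine ⟨fun j hj => ?_, ?_⟩
    · simpa [Equiv.Perm.mul_apply] using h _ (hσ.1 j hj)
    · simp [Equiv.Perm.mul_apply, hσ.2]
  · intro σ _
    simp [← mul_assoc, Equiv.swap_mul_self]
  · intro σ _
    simp [← mul_assoc, Equiv.swap_mul_self]

lemma cnt_swap_pos {Bad : Finset (Fin m)} {i : ℕ} {p p' x : Fin m}
    (hp : i ≤ (p : ℕ)) (hp' : i ≤ (p' : ℕ)) :
    Cnt Bad i p x = Cnt Bad i p' x := by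
  have hswap : ∀ (j : Fin m), (j : ℕ) < i → Equiv.swap p p' j = j := by
    intro j hj
    apply Equiv.swap_apply_of_ne_of_ne
    · exact fun h => absurd (h ▸ hj) (by omega)
    · exact fun h => absurd (h ▸ hj) (by omega)
  apply Finset.card_nbij' (fun σ => σ * Equiv.swap p p') (fun σ => σ * Equiv.swap p p')
  · intro σ hσ
    rw [Finset.mem_coe, Finset.mem_filter, mem_Av] at hσ ⊢
    refine ⟨fun j hj => ?_, ?_⟩
    · rw [Equiv.Perm.mul_apply, hswap j hj]; exact hσ.1 j hj
    · rw [Equiv.Perm.mul_apply, Equiv.swap_apply_right]; exact hσ.2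
  · intro σ hσ
    rw [Finset.mem_coe, Finset.mem_filter, mem_Av] at hσ ⊢
    refine ⟨fun j hj => ?_, ?_⟩
    · rw [Equiv.Perm.mul_apply, hswap j hj]; exact hσ.1 j hj
    · rw [Equiv.Perm.mul_apply, Equiv.swap_apply_left]; exact hσ.2
  · intro σ _
    simp [mul_assoc, Equiv.swap_mul_self]
  · intro σ _
    simp [mul_assoc, Equiv.swap_mul_self]

lemma sum_cnt_val (Bad : Finset (Fin m)) (i : ℕ) (p : Fin m) :
    ∑ x, Cnt Bad i p x = (Av Bad i).card := by
  rw [Finset.card_eq_sum_card_fiberwise (f := fun σ => σ p) (t := Finset.univ)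
    (fun _ _ => Finset.mem_univ _)]
  rfl

lemma sum_cnt_pos (Bad : Finset (Fin m)) (i : ℕ) (t₀ : Fin m) :
    ∑ p, Cnt Bad i p t₀ = (Av Bad i).card := by
  rw [Finset.card_eq_sum_card_fiberwise (f := fun σ => σ⁻¹ t₀) (t := Finset.univ)
    (fun _ _ => Finset.mem_univ _)]
  apply Finset.sum_congr rfl
  intro p _
  unfold Cnt
  congr 1
  apply Finset.filter_congr
  intro σ _
  constructor
  · intro h; simp [← h]
  · intro h; simp [← h]

lemma cnt_zero_of_lt {Bad : Finset (Fin m)} {i : ℕ} {p t₀ : Fin m}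
    (hp : (p : ℕ) < i) (ht : t₀ ∈ Bad) : Cnt Bad i p t₀ = 0 := by
  rw [Cnt, Finset.card_eq_zero, Finset.filter_eq_empty_iff]
  intro σ hσ
  rw [mem_Av] at hσ
  intro hcontra
  exact hσ p hp (hcontra ▸ ht)

lemma card_filter_le (i : ℕ) :
    ((Finset.univ : Finset (Fin m)).filter (fun p : Fin m => i ≤ (p : ℕ))).card = m - i := by
  rw [← Nat.card_Ico i m]
  apply Finset.card_nbij (fun p : Fin m => (p : ℕ))
  · intro p hp
    simp only [Finset.mem_coe, Finset.mem_filter, Finset.mem_univ, true_and] at hp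
    simp [Finset.mem_Ico, hp, p.isLt]
  · intro p _ q _ h
    exact Fin.ext h
  · intro x hx
    simp only [Finset.coe_filter, Finset.mem_Ico, Finset.mem_coe] at hx ⊢
    rcases hx with ⟨h1, h2⟩
    exact ⟨⟨x, h2⟩, by simp [h1], rfl⟩


lemma card_Av_eq {Bad : Finset (Fin m)} {i : ℕ} (hi : i < m) {t₀ : Fin m} (ht : t₀ ∈ Bad) :
    (Av Bad i).card = (m - i) * Cnt Bad i ⟨i, hi⟩ t₀ := by
  rw [← sum_cnt_pos Bad i t₀,
    ← Finset.sum_filter_add_sum_filter_not Finset.univ (fun p : Fin m => i ≤ (p : ℕ))]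
  have h2 : ∑ p ∈ Finset.univ.filter (fun p : Fin m => ¬ i ≤ (p : ℕ)), Cnt Bad i p t₀ = 0 := by
    apply Finset.sum_eq_zero
    intro p hp
    simp only [Finset.mem_filter, Finset.mem_univ, true_and, not_le] at hp
    exact cnt_zero_of_lt hp ht
  have h1 : ∑ p ∈ Finset.univ.filter (fun p : Fin m => i ≤ (p : ℕ)), Cnt Bad i p t₀
      = ∑ _p ∈ Finset.univ.filter (fun p : Fin m => i ≤ (p : ℕ)), Cnt Bad i ⟨i, hi⟩ t₀ := by
    apply Finset.sum_congr rfl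
    intro p hp
    simp only [Finset.mem_filter, Finset.mem_univ, true_and] at hp
    exact cnt_swap_pos hp (le_refl i)
  rw [h1, h2, add_zero, Finset.sum_const, card_filter_le, smul_eq_mul]

lemma Av_succ {Bad : Finset (Fin m)} {i : ℕ} (hi : i < m) :
    Av Bad (i + 1) = (Av Bad i).filter (fun σ => σ ⟨i, hi⟩ ∉ Bad) := by
  ext σ
  simp only [mem_Av, Finset.mem_filter]
  constructor
  · intro h
    exact ⟨fun j hj => h j (Nat.lt_succ_of_lt hj), h ⟨i, hi⟩ (Nat.lt_succ_self i)⟩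
  · rintro ⟨h1, h2⟩ j hj
    rcases Nat.lt_succ_iff_lt_or_eq.mp hj with h | h
    · exact h1 j h
    · have : j = ⟨i, hi⟩ := Fin.ext h
      rw [this]; exact h2

lemma card_Av_succ {Bad : Finset (Fin m)} {i : ℕ} (hi : i < m) {t₀ : Fin m} (ht : t₀ ∈ Bad) :
    (Av Bad (i + 1)).card + Bad.card * Cnt Bad i ⟨i, hi⟩ t₀ = (Av Bad i).card := by
  have h2 : (Av Bad (i + 1)).card = ∑ x ∈ Badᶜ, Cnt Bad i ⟨i, hi⟩ x := by
    rw [Finset.card_eq_sum_card_fiberwise (f := fun σ => σ ⟨i, hi⟩) (t := Badᶜ) ?_]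
    · apply Finset.sum_congr rfl
      intro x hx
      rw [Finset.mem_compl] at hx
      unfold Cnt
      congr 1
      rw [Av_succ hi]
      ext σ
      simp only [Finset.mem_filter]
      constructor
      · rintro ⟨⟨ha, _⟩, hb⟩; exact ⟨ha, hb⟩
      · rintro ⟨ha, hb⟩; exact ⟨⟨ha, hb ▸ hx⟩, hb⟩
    · intro σ hσ
      rw [Av_succ hi, Finset.mem_coe, Finset.mem_filter] at hσ
      exact Finset.mem_compl.mpr hσ.2
  have h3 : ∑ x ∈ Bad, Cnt Bad i ⟨i, hi⟩ x = Bad.card * Cnt Bad i ⟨i, hi⟩ t₀ := by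
    rw [Finset.sum_congr rfl (g := fun _ => Cnt Bad i ⟨i, hi⟩ t₀) ?_, Finset.sum_const,
      smul_eq_mul]
    intro x hx
    apply cnt_swap_value
    intro z hz
    rwa [Equiv.swap_apply_of_ne_of_ne (fun h => hz (by rw [h]; exact hx)) (fun h => hz (by rw [h]; exact ht))]
  rw [h2, ← h3, ← sum_cnt_val Bad i ⟨i, hi⟩, ← Finset.sum_add_sum_compl Bad
    (fun x => Cnt Bad i ⟨i, hi⟩ x), add_comm]

lemma cnt_base (hm : 0 < m) (Bad : Finset (Fin m)) (p t₀ : Fin m) :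
    Cnt Bad 0 p t₀ = (m - 1).factorial := by
  have hall : ∀ x y : Fin m, Cnt Bad 0 p x = Cnt Bad 0 p y := by
    intro x y
    apply Finset.card_nbij' (fun σ => Equiv.swap x y * σ) (fun σ => Equiv.swap x y * σ)
    · intro σ hσ
      rw [Finset.mem_coe, Finset.mem_filter, mem_Av] at hσ ⊢
      exact ⟨fun j hj => absurd hj (Nat.not_lt_zero _), by
        simp [Equiv.Perm.mul_apply, hσ.2]⟩
    · intro σ hσ
      rw [Finset.mem_coe, Finset.mem_filter, mem_Av] at hσ ⊢
      exact ⟨fun j hj => absurd hj (Nat.not_lt_zero _), by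
        simp [Equiv.Perm.mul_apply, hσ.2]⟩
    · intro σ _
      simp [← mul_assoc, Equiv.swap_mul_self]
    · intro σ _
      simp [← mul_assoc, Equiv.swap_mul_self]
  have hsum : ∑ x, Cnt Bad 0 p x = (Av Bad 0).card := sum_cnt_val Bad 0 p
  have hAv : (Av Bad 0).card = m.factorial := by
    have : Av Bad 0 = Finset.univ := by
      ext σ; simp [mem_Av]
    rw [this, Finset.card_univ, Fintype.card_perm, Fintype.card_fin]
  have hconst : ∑ x, Cnt Bad 0 p x = m * Cnt Bad 0 p t₀ := by
    rw [Finset.sum_congr rfl (g := fun _ => Cnt Bad 0 p t₀) (fun x _ => hall x t₀),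
      Finset.sum_const, Finset.card_univ, Fintype.card_fin, smul_eq_mul]
  have : m * Cnt Bad 0 p t₀ = m * (m - 1).factorial := by
    rw [← hconst, hsum, hAv, Nat.mul_factorial_pred hm.ne']
  exact Nat.eq_of_mul_eq_mul_left hm this

lemma cnt_key (hm : 0 < m) {β : ℝ} (hβ0 : 0 ≤ β) {Bad : Finset (Fin m)} {t₀ : Fin m}
    (ht : t₀ ∈ Bad) (hD : β * m + 1 ≤ (Bad.card : ℝ)) :
    ∀ i, (hi : i < m) → (Cnt Bad i ⟨i, hi⟩ t₀ : ℝ) ≤ (1 - β) ^ i * (m - 1).factorial := by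
  have hDm : (Bad.card : ℝ) ≤ m := by
    have := Finset.card_le_univ Bad
    rw [Fintype.card_fin] at this
    exact_mod_cast this
  have hm1 : (1 : ℝ) ≤ m := by exact_mod_cast hm
  have h1β : 0 ≤ 1 - β := by nlinarith
  intro i
  induction i with
  | zero =>
    intro hi
    rw [cnt_base hm]
    simp
  | succ n ih =>
    intro hi
    have hn : n < m := Nat.lt_of_succ_lt hi
    have e1 : (Av Bad (n + 1)).card = (m - (n + 1)) * Cnt Bad (n + 1) ⟨n + 1, hi⟩ t₀ :=
      card_Av_eq hi ht
    have e2 := card_Av_succ hn ht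
    have e3 : (Av Bad n).card = (m - n) * Cnt Bad n ⟨n, hn⟩ t₀ := card_Av_eq hn ht
    set x := (Cnt Bad (n + 1) ⟨n + 1, hi⟩ t₀ : ℝ) with hxdef
    set y := (Cnt Bad n ⟨n, hn⟩ t₀ : ℝ) with hydef
    have key : ((m : ℝ) - (n + 1)) * x + (Bad.card : ℝ) * y = ((m : ℝ) - n) * y := by
      have := e1 ▸ e2
      rw [e3] at this
      have hcast := congrArg (fun t : ℕ => (t : ℝ)) this
      push_cast [Nat.cast_sub hi.le, Nat.cast_sub hn.le] at hcast
      push_cast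
      linarith [hcast]
    have hy0 : (0 : ℝ) ≤ y := Nat.cast_nonneg _
    have hx0 : (0 : ℝ) ≤ x := Nat.cast_nonneg _
    have hA1 : (1 : ℝ) ≤ (m : ℝ) - (n + 1) := by
      have : (n + 2 : ℕ) ≤ m := hi
      have := Nat.cast_le (α := ℝ).mpr this
      push_cast at this
      linarith
    have hn0 : (0 : ℝ) ≤ (n : ℝ) := Nat.cast_nonneg _
    have hscal : (m : ℝ) - n - (Bad.card : ℝ) ≤ ((m : ℝ) - (n + 1)) * (1 - β) := by
      have h5 : 0 ≤ β * ((n : ℝ) + 1) := by positivity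
      nlinarith
    have hAx : ((m : ℝ) - (n + 1)) * x ≤ ((m : ℝ) - (n + 1)) * ((1 - β) * y) := by
      have h6 : ((m : ℝ) - n - (Bad.card : ℝ)) * y ≤ (((m : ℝ) - (n + 1)) * (1 - β)) * y :=
        mul_le_mul_of_nonneg_right hscal hy0
      nlinarith [key]
    have hstep : x ≤ (1 - β) * y := by
      have hApos : (0 : ℝ) < (m : ℝ) - (n + 1) := lt_of_lt_of_le one_pos hA1
      exact le_of_mul_le_mul_left hAx hApos
    calc x ≤ (1 - β) * y := hstep
      _ ≤ (1 - β) * ((1 - β) ^ n * (m - 1).factorial) :=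
          mul_le_mul_of_nonneg_left (ih hn) h1β
      _ = (1 - β) ^ (n + 1) * (m - 1).factorial := by ring

end Stmt6Aux

/-- Total weight of (ordered) edges from `A` to `B`. -/
def cutBetween {V : Type*} [Fintype V] (w : V → V → ℝ) (A B : Finset V) : ℝ :=
  ∑ u ∈ A, ∑ v ∈ B, w u v

/-- `parts S σ i = S_{σ(i)} \ (S_{σ(1)} ∪ ⋯ ∪ S_{σ(i-1)})`: the parts obtained
from the ordering `σ` of the multiset of sets. -/
def parts {V : Type*} [Fintype V] [DecidableEq V] {m : ℕ} (S : Fin m → Finset V)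
    (σ : Equiv.Perm (Fin m)) (i : Fin m) : Finset V :=
  S (σ i) \ (Finset.univ.filter (fun j => j < i)).biUnion (fun j => S (σ j))


section PartsLemmas

open Finset

variable {V : Type*} [Fintype V] [DecidableEq V] {m : ℕ}

lemma mem_parts (S : Fin m → Finset V) (σ : Equiv.Perm (Fin m)) (i : Fin m) (v : V) :
    v ∈ parts S σ i ↔ v ∈ S (σ i) ∧ ∀ j, j < i → v ∉ S (σ j) := by
  simp [parts]

lemma parts_disjoint (S : Fin m → Finset V) (σ : Equiv.Perm (Fin m)) {a b : Fin m}
    (hab : a ≠ b) : Disjoint (parts S σ a) (parts S σ b) := by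
  rw [Finset.disjoint_left]
  intro x hxa hxb
  rw [mem_parts] at hxa hxb
  rcases lt_or_gt_of_ne hab with h | h
  · exact hxb.2 a h hxa.1
  · exact hxa.2 b h hxb.1

lemma exists_mem_parts (S : Fin m → Finset V) (σ : Equiv.Perm (Fin m)) (v : V)
    (hv : ∃ t, v ∈ S t) : ∃ i, v ∈ parts S σ i := by
  obtain ⟨t, ht⟩ := hv
  have hF : (Finset.univ.filter (fun j => v ∈ S (σ j))).Nonempty :=
    ⟨σ.symm t, by simp [ht]⟩
  refine ⟨(Finset.univ.filter (fun j => v ∈ S (σ j))).min' hF, ?_⟩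
  rw [mem_parts]
  constructor
  · have := Finset.min'_mem _ hF
    simpa using this
  · intro j hj hmem
    have : (Finset.univ.filter (fun j => v ∈ S (σ j))).min' hF ≤ j :=
      Finset.min'_le _ _ (by simpa using hmem)
    exact absurd this (not_le.mpr hj)

lemma cutBetween_comm (w : V → V → ℝ) (hwsym : ∀ u v, w u v = w v u) (A B : Finset V) :
    cutBetween w A B = cutBetween w B A := by
  rw [cutBetween, cutBetween, Finset.sum_comm]
  exact Finset.sum_congr rfl fun v _ => Finset.sum_congr rfl fun u _ => hwsym u v

lemma cutBetween_biUnion (w : V → V → ℝ) (A : Finset V) {ι : Type*} [DecidableEq ι]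
    (s : Finset ι) (f : ι → Finset V)
    (hdisj : ∀ a ∈ s, ∀ b ∈ s, a ≠ b → Disjoint (f a) (f b)) :
    cutBetween w A (s.biUnion f) = ∑ j ∈ s, cutBetween w A (f j) := by
  rw [cutBetween]
  have : ∀ u, ∑ v ∈ s.biUnion f, w u v = ∑ j ∈ s, ∑ v ∈ f j, w u v := by
    intro u
    exact Finset.sum_biUnion hdisj
  rw [Finset.sum_congr rfl fun u _ => this u, Finset.sum_comm]
  rfl

end PartsLemmas

set_option maxHeartbeats 2000000 in
theorem stmt_6 {V : Type*} [Fintype V] [DecidableEq V]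
    (w : V → V → ℝ) (hw : ∀ u v, 0 ≤ w u v) (hwsym : ∀ u v, w u v = w v u)
    (m : ℕ) (hm : 0 < m) (S : Fin m → Finset V)
    (c k B : ℝ) (hc0 : 0 < c) (hc1 : c ≤ 1) (hk : 1 ≤ k) (hB : 0 ≤ B)
    (hcover : ∀ v : V,
      (c / k) * m ≤ ((Finset.univ.filter (fun i => v ∈ S i)).card : ℝ))
    (hδ : ∀ i, cutw w (S i) ≤ B) :
    (∀ i : Fin m,
      ∑ σ : Equiv.Perm (Fin m),
        cutBetween w (parts S σ i)
          ((Finset.univ.filter (fun j => i < j)).biUnion (fun j => parts S σ j))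
        ≤ (m.factorial : ℝ) * ((1 - c / k) ^ (i : ℕ) * B)) ∧
    (∑ σ : Equiv.Perm (Fin m), ∑ i, cutw w (parts S σ i)
        ≤ (m.factorial : ℝ) * (2 * k * B / c)) := by
  classical
  have hk0 : (0 : ℝ) < k := lt_of_lt_of_le one_pos hk
  have hβ0 : (0 : ℝ) < c / k := div_pos hc0 hk0
  have hβ1 : c / k ≤ 1 := by
    rw [div_le_one hk0]; exact hc1.trans hk
  have h1β0 : (0 : ℝ) ≤ 1 - c / k := by linarith
  have hfact : ((m : ℝ)) * ((m - 1).factorial : ℝ) = (m.factorial : ℝ) := by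
    exact_mod_cast congrArg (fun t : ℕ => (t : ℝ)) (Nat.mul_factorial_pred hm.ne')
  -- Claim 1
  have claim1 : ∀ i : Fin m,
      ∑ σ : Equiv.Perm (Fin m),
        cutBetween w (parts S σ i)
          ((Finset.univ.filter (fun j => i < j)).biUnion (fun j => parts S σ j))
        ≤ (m.factorial : ℝ) * ((1 - c / k) ^ (i : ℕ) * B) := by
    intro i
    set Bd : V → V → Finset (Fin m) :=
      fun u v => Finset.univ.filter (fun t => u ∈ S t ∨ v ∈ S t) with hBd
    set Ef : V → V → Finset (Fin m) :=
      fun u v => Finset.univ.filter (fun t => u ∈ S t ∧ v ∉ S t) with hEf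
    set Q : Equiv.Perm (Fin m) → V → V → Prop :=
      fun σ u v => σ ∈ Stmt6Aux.Av (Bd u v) (i : ℕ) ∧ σ i ∈ Ef u v with hQ
    -- Step A: pointwise bound for a fixed permutation
    have stepA : ∀ σ : Equiv.Perm (Fin m),
        cutBetween w (parts S σ i)
          ((Finset.univ.filter (fun j => i < j)).biUnion (fun j => parts S σ j))
        ≤ ∑ u : V, ∑ v : V, (if Q σ u v then w u v else 0) := by
      intro σ
      have hQholds : ∀ u ∈ parts S σ i,
          ∀ v ∈ (Finset.univ.filter (fun j => i < j)).biUnion (fun j => parts S σ j),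
          Q σ u v := by
        intro u hu v hv
        rw [mem_parts] at hu
        rw [Finset.mem_biUnion] at hv
        obtain ⟨j, hjmem, hvj⟩ := hv
        rw [Finset.mem_filter] at hjmem
        have hij : i < j := hjmem.2
        rw [mem_parts] at hvj
        constructor
        · rw [Stmt6Aux.mem_Av]
          intro j₀ hj₀
          have hj₀i : j₀ < i := hj₀
          simp only [hBd, Finset.mem_filter, Finset.mem_univ, true_and, not_or]
          exact ⟨hu.2 j₀ hj₀i, hvj.2 j₀ (hj₀i.trans hij)⟩
        · simp only [hEf, Finset.mem_filter, Finset.mem_univ, true_and]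
          exact ⟨hu.1, hvj.2 i hij⟩
      rw [cutBetween]
      calc ∑ u ∈ parts S σ i,
            ∑ v ∈ (Finset.univ.filter (fun j => i < j)).biUnion (fun j => parts S σ j), w u v
          = ∑ u ∈ parts S σ i,
            ∑ v ∈ (Finset.univ.filter (fun j => i < j)).biUnion (fun j => parts S σ j),
              (if Q σ u v then w u v else 0) := by
            refine Finset.sum_congr rfl fun u hu => Finset.sum_congr rfl fun v hv => ?_
            rw [if_pos (hQholds u hu v hv)]
        _ ≤ ∑ u ∈ parts S σ i, ∑ v : V, (if Q σ u v then w u v else 0) := by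
            refine Finset.sum_le_sum fun u _ => ?_
            refine Finset.sum_le_sum_of_subset_of_nonneg (Finset.subset_univ _)
              fun v _ _ => ?_
            split
            · exact hw u v
            · exact le_refl 0
        _ ≤ ∑ u : V, ∑ v : V, (if Q σ u v then w u v else 0) := by
            refine Finset.sum_le_sum_of_subset_of_nonneg (Finset.subset_univ _)
              fun u _ _ => Finset.sum_nonneg fun v _ => ?_
            split
            · exact hw u v
            · exact le_refl 0
    -- Step B: exchange the sums
    have stepB : ∑ σ : Equiv.Perm (Fin m), ∑ u : V, ∑ v : V, (if Q σ u v then w u v else 0)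
        = ∑ u : V, ∑ v : V,
            w u v * ((Finset.univ.filter (fun σ : Equiv.Perm (Fin m) => Q σ u v)).card : ℝ) := by
      rw [Finset.sum_comm]
      refine Finset.sum_congr rfl fun u _ => ?_
      rw [Finset.sum_comm]
      refine Finset.sum_congr rfl fun v _ => ?_
      rw [← Finset.sum_filter, Finset.sum_const, nsmul_eq_mul, mul_comm]
    -- Step C: counting bound
    have stepC : ∀ u v : V,
        ((Finset.univ.filter (fun σ : Equiv.Perm (Fin m) => Q σ u v)).card : ℝ)
        ≤ ((Ef u v).card : ℝ) * ((1 - c / k) ^ (i : ℕ) * ((m - 1).factorial : ℝ)) := by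
      intro u v
      have hfib : (Finset.univ.filter (fun σ : Equiv.Perm (Fin m) => Q σ u v)).card
          = ∑ t ∈ Ef u v, Stmt6Aux.Cnt (Bd u v) (i : ℕ) i t := by
        rw [Finset.card_eq_sum_card_fiberwise (f := fun σ : Equiv.Perm (Fin m) => σ i)
          (t := Ef u v) ?_]
        · refine Finset.sum_congr rfl fun t ht => ?_
          unfold Stmt6Aux.Cnt
          congr 1
          ext σ
          simp only [Finset.mem_filter, Finset.mem_univ, true_and, hQ]
          constructor
          · rintro ⟨⟨h1, _⟩, h3⟩; exact ⟨h1, h3⟩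
          · rintro ⟨h1, h3⟩; exact ⟨⟨h1, h3 ▸ ht⟩, h3⟩
        · intro σ hσ
          rw [Finset.mem_coe, Finset.mem_filter] at hσ
          exact hσ.2.2
      rw [hfib]
      push_cast
      have hbound : ∀ t ∈ Ef u v,
          (Stmt6Aux.Cnt (Bd u v) (i : ℕ) i t : ℝ)
          ≤ (1 - c / k) ^ (i : ℕ) * ((m - 1).factorial : ℝ) := by
        intro t ht
        simp only [hEf, Finset.mem_filter, Finset.mem_univ, true_and] at ht
        have htBd : t ∈ Bd u v := by
          simp only [hBd, Finset.mem_filter, Finset.mem_univ, true_and]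
          exact Or.inl ht.1
        have hD : (c / k) * m + 1 ≤ ((Bd u v).card : ℝ) := by
          have hsub : insert t (Finset.univ.filter (fun t' => v ∈ S t')) ⊆ Bd u v := by
            intro x hx
            rw [Finset.mem_insert] at hx
            simp only [hBd, Finset.mem_filter, Finset.mem_univ, true_and]
            rcases hx with h | h
            · exact Or.inl (h ▸ ht.1)
            · simp only [Finset.mem_filter, Finset.mem_univ, true_and] at h
              exact Or.inr h
          have hnotmem : t ∉ Finset.univ.filter (fun t' => v ∈ S t') := by
            simp [ht.2]
          have hcard : (Finset.univ.filter (fun t' => v ∈ S t')).card + 1 ≤ (Bd u v).card := by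
            have := Finset.card_le_card hsub
            rwa [Finset.card_insert_of_notMem hnotmem] at this
          have := hcover v
          have hcast : ((Finset.univ.filter (fun t' => v ∈ S t')).card : ℝ) + 1
              ≤ ((Bd u v).card : ℝ) := by exact_mod_cast hcard
          linarith
        exact Stmt6Aux.cnt_key hm (le_of_lt hβ0) htBd hD (i : ℕ) i.isLt
      calc ∑ t ∈ Ef u v, (Stmt6Aux.Cnt (Bd u v) (i : ℕ) i t : ℝ)
          ≤ ∑ _t ∈ Ef u v, (1 - c / k) ^ (i : ℕ) * ((m - 1).factorial : ℝ) :=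
            Finset.sum_le_sum hbound
        _ = ((Ef u v).card : ℝ) * ((1 - c / k) ^ (i : ℕ) * ((m - 1).factorial : ℝ)) := by
            rw [Finset.sum_const, nsmul_eq_mul]
    -- Step D: total weight identity
    have stepD : ∑ u : V, ∑ v : V, w u v * ((Ef u v).card : ℝ)
        = ∑ t : Fin m, cutw w (S t) := by
      have hcardE : ∀ u v : V, ((Ef u v).card : ℝ)
          = ∑ t : Fin m, (if u ∈ S t ∧ v ∉ S t then (1 : ℝ) else 0) := by
        intro u v
        rw [hEf]
        rw [Finset.card_filter]
        push_cast
        rfl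
      calc ∑ u : V, ∑ v : V, w u v * ((Ef u v).card : ℝ)
          = ∑ u : V, ∑ v : V, ∑ t : Fin m,
              w u v * (if u ∈ S t ∧ v ∉ S t then (1 : ℝ) else 0) := by
            refine Finset.sum_congr rfl fun u _ => Finset.sum_congr rfl fun v _ => ?_
            rw [hcardE, Finset.mul_sum]
        _ = ∑ u : V, ∑ t : Fin m, ∑ v : V,
              w u v * (if u ∈ S t ∧ v ∉ S t then (1 : ℝ) else 0) :=
            Finset.sum_congr rfl fun u _ => Finset.sum_comm
        _ = ∑ t : Fin m, ∑ u : V, ∑ v : V,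
              w u v * (if u ∈ S t ∧ v ∉ S t then (1 : ℝ) else 0) :=
            Finset.sum_comm
        _ = ∑ t : Fin m, cutw w (S t) := by
            refine Finset.sum_congr rfl fun t _ => ?_
            rw [cutw]
            have hcompl : (S t)ᶜ = Finset.univ.filter (fun v => v ∉ S t) := by
              ext v; simp
            calc ∑ u : V, ∑ v : V, w u v * (if u ∈ S t ∧ v ∉ S t then (1 : ℝ) else 0)
                = ∑ u : V, (if u ∈ S t then (∑ v : V, (if v ∉ S t then w u v else 0)) else 0) := by
                  refine Finset.sum_congr rfl fun u _ => ?_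
                  by_cases hu : u ∈ S t
                  · rw [if_pos hu]
                    refine Finset.sum_congr rfl fun v _ => ?_
                    by_cases hv : v ∉ S t
                    · rw [if_pos ⟨hu, hv⟩, if_pos hv, mul_one]
                    · rw [if_neg (fun hcon => hv hcon.2), if_neg hv, mul_zero]
                  · rw [if_neg hu]
                    refine Finset.sum_eq_zero fun v _ => ?_
                    rw [if_neg (fun hcon => hu hcon.1), mul_zero]
              _ = ∑ u ∈ S t, ∑ v ∈ (S t)ᶜ, w u v := by
                  rw [hcompl]
                  rw [← Finset.sum_filter]
                  have : Finset.univ.filter (fun u => u ∈ S t) = S t := by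
                    ext u; simp
                  rw [this]
                  refine Finset.sum_congr rfl fun u _ => ?_
                  rw [← Finset.sum_filter]
    -- assemble claim 1
    calc ∑ σ : Equiv.Perm (Fin m),
          cutBetween w (parts S σ i)
            ((Finset.univ.filter (fun j => i < j)).biUnion (fun j => parts S σ j))
        ≤ ∑ σ : Equiv.Perm (Fin m), ∑ u : V, ∑ v : V, (if Q σ u v then w u v else 0) :=
          Finset.sum_le_sum fun σ _ => stepA σ
      _ = ∑ u : V, ∑ v : V,
            w u v * ((Finset.univ.filter (fun σ : Equiv.Perm (Fin m) => Q σ u v)).card : ℝ) :=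
          stepB
      _ ≤ ∑ u : V, ∑ v : V,
            w u v * (((Ef u v).card : ℝ) * ((1 - c / k) ^ (i : ℕ) * ((m - 1).factorial : ℝ))) := by
          refine Finset.sum_le_sum fun u _ => Finset.sum_le_sum fun v _ => ?_
          exact mul_le_mul_of_nonneg_left (stepC u v) (hw u v)
      _ = (∑ u : V, ∑ v : V, w u v * ((Ef u v).card : ℝ))
            * ((1 - c / k) ^ (i : ℕ) * ((m - 1).factorial : ℝ)) := by
          rw [Finset.sum_mul]
          refine Finset.sum_congr rfl fun u _ => ?_
          rw [Finset.sum_mul]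
          refine Finset.sum_congr rfl fun v _ => ?_
          ring
      _ = (∑ t : Fin m, cutw w (S t)) * ((1 - c / k) ^ (i : ℕ) * ((m - 1).factorial : ℝ)) := by
          rw [stepD]
      _ ≤ ((m : ℝ) * B) * ((1 - c / k) ^ (i : ℕ) * ((m - 1).factorial : ℝ)) := by
          refine mul_le_mul_of_nonneg_right ?_ (by positivity)
          calc ∑ t : Fin m, cutw w (S t) ≤ ∑ _t : Fin m, B := Finset.sum_le_sum fun t _ => hδ t
            _ = (m : ℝ) * B := by
                rw [Finset.sum_const, Finset.card_univ, Fintype.card_fin, nsmul_eq_mul]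
      _ = (m.factorial : ℝ) * ((1 - c / k) ^ (i : ℕ) * B) := by
          rw [← hfact]; ring
  refine ⟨claim1, ?_⟩
  -- every vertex lies in some set
  have hexists : ∀ v : V, ∃ t, v ∈ S t := by
    intro v
    by_contra hcon
    push_neg at hcon
    have : (Finset.univ.filter (fun t => v ∈ S t)) = ∅ := by
      rw [Finset.filter_eq_empty_iff]
      exact fun t _ => hcon t
    have h2 := hcover v
    rw [this] at h2
    simp only [Finset.card_empty, Nat.cast_zero] at h2
    have : (0 : ℝ) < (c / k) * m := by positivity
    linarith
  have hdisj : ∀ (σ : Equiv.Perm (Fin m)) (a b : Fin m), a ≠ b →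
      Disjoint (parts S σ a) (parts S σ b) := fun σ a b hab => parts_disjoint S σ hab
  -- split each cut into earlier and later parts
  have hcut : ∀ σ : Equiv.Perm (Fin m),
      ∑ i : Fin m, cutw w (parts S σ i)
      = 2 * ∑ i : Fin m, cutBetween w (parts S σ i)
          ((Finset.univ.filter (fun j => i < j)).biUnion (fun j => parts S σ j)) := by
    intro σ
    have hcompl : ∀ i : Fin m, (parts S σ i)ᶜ
        = (Finset.univ.filter (fun j => j < i)).biUnion (fun j => parts S σ j)
          ∪ (Finset.univ.filter (fun j => i < j)).biUnion (fun j => parts S σ j) := by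
      intro i
      ext v
      simp only [Finset.mem_compl, Finset.mem_union, Finset.mem_biUnion, Finset.mem_filter,
        Finset.mem_univ, true_and]
      constructor
      · intro hvn
        obtain ⟨j, hj⟩ := exists_mem_parts S σ v (hexists v)
        have hne : j ≠ i := fun h => hvn (h ▸ hj)
        rcases lt_or_gt_of_ne hne with h | h
        · exact Or.inl ⟨j, h, hj⟩
        · exact Or.inr ⟨j, h, hj⟩
      · rintro (⟨j, hij, hj⟩ | ⟨j, hij, hj⟩) hvi
        · exact Finset.disjoint_left.mp (hdisj σ j i (ne_of_lt hij)) hj hvi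
        · exact Finset.disjoint_left.mp (hdisj σ j i (ne_of_gt hij)) hj hvi
    have hUdisj : ∀ i : Fin m,
        Disjoint ((Finset.univ.filter (fun j => j < i)).biUnion (fun j => parts S σ j))
          ((Finset.univ.filter (fun j => i < j)).biUnion (fun j => parts S σ j)) := by
      intro i
      rw [Finset.disjoint_biUnion_left]
      intro a ha
      rw [Finset.disjoint_biUnion_right]
      intro b hb
      rw [Finset.mem_filter] at ha hb
      exact hdisj σ a b (ne_of_lt (ha.2.trans hb.2))
    have hsplit : ∀ i : Fin m, cutw w (parts S σ i)
        = cutBetween w (parts S σ i)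
            ((Finset.univ.filter (fun j => j < i)).biUnion (fun j => parts S σ j))
          + cutBetween w (parts S σ i)
            ((Finset.univ.filter (fun j => i < j)).biUnion (fun j => parts S σ j)) := by
      intro i
      rw [cutw, cutBetween, cutBetween, ← Finset.sum_add_distrib]
      refine Finset.sum_congr rfl fun u _ => ?_
      rw [hcompl i, Finset.sum_union (hUdisj i)]
    have hswap : ∑ i : Fin m, cutBetween w (parts S σ i)
          ((Finset.univ.filter (fun j => j < i)).biUnion (fun j => parts S σ j))
        = ∑ i : Fin m, cutBetween w (parts S σ i)
          ((Finset.univ.filter (fun j => i < j)).biUnion (fun j => parts S σ j)) := by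
      have hG : ∀ a b : Fin m, cutBetween w (parts S σ a) (parts S σ b)
          = cutBetween w (parts S σ b) (parts S σ a) :=
        fun a b => cutBetween_comm w hwsym _ _
      calc ∑ i : Fin m, cutBetween w (parts S σ i)
            ((Finset.univ.filter (fun j => j < i)).biUnion (fun j => parts S σ j))
          = ∑ i : Fin m, ∑ j ∈ Finset.univ.filter (fun j => j < i),
              cutBetween w (parts S σ i) (parts S σ j) :=
            Finset.sum_congr rfl fun i _ =>
              cutBetween_biUnion w _ _ _ (fun a _ b _ hab => hdisj σ a b hab)
        _ = ∑ i : Fin m, ∑ j : Fin m,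
              (if j < i then cutBetween w (parts S σ i) (parts S σ j) else 0) :=
            Finset.sum_congr rfl fun i _ => Finset.sum_filter _ _
        _ = ∑ j : Fin m, ∑ i : Fin m,
              (if j < i then cutBetween w (parts S σ i) (parts S σ j) else 0) :=
            Finset.sum_comm
        _ = ∑ j : Fin m, ∑ i ∈ Finset.univ.filter (fun i => j < i),
              cutBetween w (parts S σ i) (parts S σ j) :=
            Finset.sum_congr rfl fun j _ => (Finset.sum_filter _ _).symm
        _ = ∑ j : Fin m, ∑ i ∈ Finset.univ.filter (fun i => j < i),
              cutBetween w (parts S σ j) (parts S σ i) :=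
            Finset.sum_congr rfl fun j _ => Finset.sum_congr rfl fun i _ => hG i j
        _ = ∑ i : Fin m, cutBetween w (parts S σ i)
            ((Finset.univ.filter (fun j => i < j)).biUnion (fun j => parts S σ j)) :=
            (Finset.sum_congr rfl fun i _ =>
              cutBetween_biUnion w _ _ _ (fun a _ b _ hab => hdisj σ a b hab)).symm
    calc ∑ i : Fin m, cutw w (parts S σ i)
        = ∑ i : Fin m, (cutBetween w (parts S σ i)
            ((Finset.univ.filter (fun j => j < i)).biUnion (fun j => parts S σ j))
          + cutBetween w (parts S σ i)
            ((Finset.univ.filter (fun j => i < j)).biUnion (fun j => parts S σ j))) :=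
          Finset.sum_congr rfl fun i _ => hsplit i
      _ = (∑ i : Fin m, cutBetween w (parts S σ i)
            ((Finset.univ.filter (fun j => j < i)).biUnion (fun j => parts S σ j)))
          + ∑ i : Fin m, cutBetween w (parts S σ i)
            ((Finset.univ.filter (fun j => i < j)).biUnion (fun j => parts S σ j)) :=
          Finset.sum_add_distrib
      _ = 2 * ∑ i : Fin m, cutBetween w (parts S σ i)
            ((Finset.univ.filter (fun j => i < j)).biUnion (fun j => parts S σ j)) := by
          rw [hswap]; ring
  -- геометрическая сумма
  have hgeom : ∑ i ∈ Finset.range m, (1 - c / k) ^ i ≤ 1 / (c / k) := by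
    rw [le_div_iff₀ hβ0]
    have hmul := geom_sum_mul (x := 1 - c / k) m
    have hpow : (0 : ℝ) ≤ (1 - c / k) ^ m := pow_nonneg h1β0 m
    nlinarith [hmul]
  calc ∑ σ : Equiv.Perm (Fin m), ∑ i : Fin m, cutw w (parts S σ i)
      = ∑ σ : Equiv.Perm (Fin m), 2 * ∑ i : Fin m, cutBetween w (parts S σ i)
          ((Finset.univ.filter (fun j => i < j)).biUnion (fun j => parts S σ j)) :=
        Finset.sum_congr rfl fun σ _ => hcut σ
    _ = 2 * ∑ i : Fin m, ∑ σ : Equiv.Perm (Fin m), cutBetween w (parts S σ i)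
          ((Finset.univ.filter (fun j => i < j)).biUnion (fun j => parts S σ j)) := by
        rw [← Finset.mul_sum, Finset.sum_comm]
    _ ≤ 2 * ∑ i : Fin m, (m.factorial : ℝ) * ((1 - c / k) ^ (i : ℕ) * B) := by
        refine mul_le_mul_of_nonneg_left (Finset.sum_le_sum fun i _ => claim1 i) (by norm_num)
    _ = 2 * ((m.factorial : ℝ) * B * ∑ i ∈ Finset.range m, (1 - c / k) ^ i) := by
        rw [← Fin.sum_univ_eq_sum_range (fun n => (1 - c / k) ^ n) m]
        simp only [Finset.mul_sum]
        exact Finset.sum_congr rfl fun i _ => by ring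
    _ ≤ 2 * ((m.factorial : ℝ) * B * (1 / (c / k))) := by
        refine mul_le_mul_of_nonneg_left ?_ (by norm_num)
        refine mul_le_mul_of_nonneg_left hgeom (by positivity)
    _ = (m.factorial : ℝ) * (2 * k * B / c) := by
        rw [one_div_div]
        ring
end

section
/- Consider the star instance of Min-Max-Multiway-Cut: a single center vertex u joined by unit-weight edges to k terminals t_1,...,t_k. Every partition of the vertex set into k parts, where part i contains terminal t_i, has max_i δ(S_i) ≥ k − 1, while the SDP relaxation with ℓ₂² triangle inequalities has a feasible solution of value 2(k−1)/k. Hence the integrality gap is at least k/2. -/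
open Classical RealInnerProductSpace

/-- The cut value of a set `A` of vertices in the star graph with center `none`
and unit-weight edges to the `k` terminals `some i`: the number of star edges
with exactly one endpoint in `A`. -/
noncomputable def starCut (k : ℕ) (A : Finset (Option (Fin k))) : ℝ :=
  ((Finset.univ.filter (fun i : Fin k =>
      ((none : Option (Fin k)) ∈ A ∧ some i ∉ A) ∨
      ((none : Option (Fin k)) ∉ A ∧ some i ∈ A))).card : ℝ)

/-- The label vectors for the center: scaled standard basis vectors. -/
noncomputable def yvec (k : ℕ) (i : Fin k) : EuclideanSpace ℝ (Fin (k + 1)) :=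
  (Real.sqrt k)⁻¹ • EuclideanSpace.single i.castSucc 1

/-- The common unit vector assigned to each terminal for its own label. -/
noncomputable def evec (k : ℕ) : EuclideanSpace ℝ (Fin (k + 1)) := ∑ j, yvec k j

/-- The feasible SDP solution. -/
noncomputable def Yvec (k : ℕ) : Option (Fin k) → Fin k → EuclideanSpace ℝ (Fin (k + 1))
  | none, i => yvec k i
  | some a, i => if i = a then evec k else 0

lemma inner_yy {k : ℕ} (hk : 1 ≤ k) (i j : Fin k) :
    ⟪yvec k i, yvec k j⟫ = if i = j then (k : ℝ)⁻¹ else 0 := by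
  have hk0 : (0:ℝ) < k := by exact_mod_cast hk
  have hs : (Real.sqrt k)⁻¹ * (Real.sqrt k)⁻¹ = (k : ℝ)⁻¹ := by
    rw [← mul_inv, Real.mul_self_sqrt hk0.le]
  unfold yvec
  rw [inner_smul_left, inner_smul_right, EuclideanSpace.inner_single_left]
  simp only [EuclideanSpace.single_apply, Fin.castSucc_inj, conj_trivial, map_inv₀]
  split_ifs with h <;> simp [hs]

lemma inner_ye {k : ℕ} (hk : 1 ≤ k) (i : Fin k) : ⟪yvec k i, evec k⟫ = (k : ℝ)⁻¹ := by
  unfold evec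
  rw [inner_sum]
  simp [inner_yy hk]

lemma inner_ey {k : ℕ} (hk : 1 ≤ k) (i : Fin k) : ⟪evec k, yvec k i⟫ = (k : ℝ)⁻¹ := by
  rw [real_inner_comm]; exact inner_ye hk i

lemma inner_ee {k : ℕ} (hk : 1 ≤ k) : ⟪evec k, evec k⟫ = 1 := by
  have hk0 : (k:ℝ) ≠ 0 := by positivity
  have h : ⟪evec k, evec k⟫ = ∑ j, ⟪yvec k j, evec k⟫ := sum_inner _ _ _
  rw [h]
  simp [inner_ye hk, Finset.card_univ, hk0]

lemma norm_sq_y {k : ℕ} (hk : 1 ≤ k) (i : Fin k) : ‖yvec k i‖ ^ 2 = (k : ℝ)⁻¹ := by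
  rw [← real_inner_self_eq_norm_sq, inner_yy hk]; simp

lemma norm_sq_e {k : ℕ} (hk : 1 ≤ k) : ‖evec k‖ ^ 2 = 1 := by
  rw [← real_inner_self_eq_norm_sq, inner_ee hk]

lemma sum_Yvec {k : ℕ} (v : Option (Fin k)) : ∑ j, Yvec k v j = evec k := by
  match v with
  | none => rfl
  | some a => simp [Yvec]

lemma Yvec_classify {k : ℕ} (v : Option (Fin k)) (i : Fin k) :
    Yvec k v i = 0 ∨ Yvec k v i = evec k ∨ ∃ j, Yvec k v i = yvec k j := by
  match v with
  | none => exact Or.inr (Or.inr ⟨i, rfl⟩)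
  | some a =>
    by_cases h : i = a
    · exact Or.inr (Or.inl (by simp [Yvec, h]))
    · exact Or.inl (by simp [Yvec, h])

lemma mem_classify {k : ℕ} (p : EuclideanSpace ℝ (Fin (k + 1)))
    (hp : p ∈ insert 0 (Set.range fun vi : Option (Fin k) × Fin k => Yvec k vi.1 vi.2)) :
    p = 0 ∨ p = evec k ∨ ∃ i, p = yvec k i := by
  rcases hp with rfl | ⟨⟨v, i⟩, rfl⟩
  · exact Or.inl rfl
  · exact Yvec_classify v i

lemma tri_aux {E : Type*} [NormedAddCommGroup E] [InnerProductSpace ℝ E]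
    (p q r : E) (h : 0 ≤ ⟪p - q, r - q⟫) :
    ‖p - r‖ ^ 2 ≤ ‖p - q‖ ^ 2 + ‖q - r‖ ^ 2 := by
  rw [← real_inner_self_eq_norm_sq, ← real_inner_self_eq_norm_sq, ← real_inner_self_eq_norm_sq]
  simp only [inner_sub_left, inner_sub_right] at *
  have h1 := real_inner_comm p q
  have h2 := real_inner_comm p r
  have h3 := real_inner_comm q r
  linarith

lemma inner_nonneg_aux {k : ℕ} (hk : 2 ≤ k) (p q r : EuclideanSpace ℝ (Fin (k + 1)))
    (hp : p = 0 ∨ p = evec k ∨ ∃ i, p = yvec k i)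
    (hq : q = 0 ∨ q = evec k ∨ ∃ i, q = yvec k i)
    (hr : r = 0 ∨ r = evec k ∨ ∃ i, r = yvec k i) :
    0 ≤ ⟪p - q, r - q⟫ := by
  have hk1 : 1 ≤ k := le_trans (by norm_num) hk
  have hki : (k:ℝ)⁻¹ ≤ 2⁻¹ := by
    apply inv_anti₀ (by norm_num)
    exact_mod_cast hk
  have hki0 : (0:ℝ) < (k:ℝ)⁻¹ := by
    have : (0:ℝ) < k := by positivity
    positivity
  rcases hp with rfl | rfl | ⟨i, rfl⟩ <;> rcases hq with rfl | rfl | ⟨j, rfl⟩ <;>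
    rcases hr with rfl | rfl | ⟨l, rfl⟩ <;>
    simp only [inner_sub_left, inner_sub_right, inner_neg_left, inner_neg_right,
      inner_yy hk1, inner_ye hk1, inner_ey hk1, inner_ee hk1, inner_zero_left,
      inner_zero_right, zero_sub, sub_zero, sub_self, neg_neg, neg_sub, sub_neg_eq_add] <;>
    first
      | positivity
      | linarith
      | (split_ifs <;> first | positivity | linarith | simp_all)

theorem stmt_14 (k : ℕ) (hk : 2 ≤ k) :
    -- every partition separating the terminals has min-max value at least k - 1
    (∀ A : Fin k → Finset (Option (Fin k)),
      (∀ i j, i ≠ j → Disjoint (A i) (A j)) →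
      Finset.univ.biUnion A = Finset.univ →
      (∀ i, (some i : Option (Fin k)) ∈ A i) →
      ∃ i, (k - 1 : ℝ) ≤ starCut k (A i)) ∧
    -- the SDP relaxation has a feasible solution of value 2(k-1)/k
    (∃ Y : Option (Fin k) → Fin k → EuclideanSpace ℝ (Fin (k + 1)),
      (∀ v, ∑ i, ‖Y v i‖ ^ 2 = 1) ∧
      (∀ i, ‖Y (some i) i‖ ^ 2 = 1) ∧
      (∀ v i j, i ≠ j → ⟪Y v i, Y v j⟫ = 0) ∧
      (∀ u v i, ⟪Y u i, ∑ j, Y v j⟫ = ‖Y u i‖ ^ 2) ∧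
      (∀ p q r : EuclideanSpace ℝ (Fin (k + 1)),
        p ∈ insert 0 (Set.range fun vi : Option (Fin k) × Fin k => Y vi.1 vi.2) →
        q ∈ insert 0 (Set.range fun vi : Option (Fin k) × Fin k => Y vi.1 vi.2) →
        r ∈ insert 0 (Set.range fun vi : Option (Fin k) × Fin k => Y vi.1 vi.2) →
        ‖p - r‖ ^ 2 ≤ ‖p - q‖ ^ 2 + ‖q - r‖ ^ 2) ∧
      (∀ u v i j, 0 ≤ ⟪Y u i, Y v j⟫) ∧
      (∀ u v i j, ⟪Y u i, Y v j⟫ ≤ ‖Y u i‖ ^ 2) ∧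
      (∀ i : Fin k, ∑ a : Fin k, ‖Y none i - Y (some a) i‖ ^ 2
          = 2 * ((k : ℝ) - 1) / k)) := by
  have hk1 : 1 ≤ k := le_trans (by norm_num) hk
  have hk0 : (k:ℝ) ≠ 0 := by positivity
  constructor
  · -- combinatorial part
    intro A hdisj hcover hterm
    have hnone : (none : Option (Fin k)) ∈ Finset.univ.biUnion A := by
      rw [hcover]; exact Finset.mem_univ _
    rw [Finset.mem_biUnion] at hnone
    obtain ⟨i₀, -, hi₀⟩ := hnone
    refine ⟨i₀, ?_⟩
    unfold starCut
    have hsub : Finset.univ.filter (fun j : Fin k => j ≠ i₀) ⊆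
        Finset.univ.filter (fun i : Fin k =>
          ((none : Option (Fin k)) ∈ A i₀ ∧ some i ∉ A i₀) ∨
          ((none : Option (Fin k)) ∉ A i₀ ∧ some i ∈ A i₀)) := by
      intro j hj
      rw [Finset.mem_filter] at hj ⊢
      refine ⟨Finset.mem_univ _, Or.inl ⟨hi₀, ?_⟩⟩
      intro hmem
      exact Finset.disjoint_left.mp (hdisj j i₀ hj.2) (hterm j) hmem
    have hcard := Finset.card_le_card hsub
    have hcard2 : (Finset.univ.filter (fun j : Fin k => j ≠ i₀)).card = k - 1 := by
      rw [Finset.filter_ne']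
      rw [Finset.card_erase_of_mem (Finset.mem_univ _), Finset.card_univ, Fintype.card_fin]
    rw [hcard2] at hcard
    calc (k : ℝ) - 1 = ((k - 1 : ℕ) : ℝ) := by
          rw [Nat.cast_sub hk1]; norm_num
      _ ≤ _ := by exact_mod_cast hcard
  · -- SDP part
    refine ⟨Yvec k, ?_, ?_, ?_, ?_, ?_, ?_, ?_, ?_⟩
    · -- sums of squared norms equal 1
      intro v
      match v with
      | none =>
        simp only [Yvec, norm_sq_y hk1]
        simp [Finset.card_univ, hk0]
      | some a =>
        simp only [Yvec, apply_ite (fun x : EuclideanSpace ℝ (Fin (k + 1)) => ‖x‖ ^ 2),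
          norm_sq_e hk1, norm_zero]
        simp
    · -- terminal own-label vector is a unit vector
      intro i
      simp [Yvec, norm_sq_e hk1]
    · -- orthogonality of distinct labels at a vertex
      intro v i j hij
      match v with
      | none => rw [show Yvec k none i = yvec k i from rfl,
          show Yvec k none j = yvec k j from rfl, inner_yy hk1, if_neg hij]
      | some a =>
        simp only [Yvec]
        split_ifs with h1 h2 <;> simp_all
    · -- spreading constraint
      intro u v i
      rw [sum_Yvec]
      match u with
      | none =>
        rw [show Yvec k none i = yvec k i from rfl, inner_ye hk1, norm_sq_y hk1]
      | some a =>
        by_cases h : i = a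
        · simp [Yvec, h, inner_ee hk1, norm_sq_e hk1]
        · simp [Yvec, h]
    · -- ℓ₂² triangle inequalities
      intro p q r hp hq hr
      exact tri_aux p q r
        (inner_nonneg_aux hk p q r (mem_classify p hp) (mem_classify q hq) (mem_classify r hr))
    · -- nonnegativity of inner products
      intro u v i j
      have h := inner_nonneg_aux hk (Yvec k u i) 0 (Yvec k v j)
        (Yvec_classify u i) (Or.inl rfl) (Yvec_classify v j)
      simpa using h
    · -- inner products bounded by squared norms
      intro u v i j
      have hki : (k:ℝ)⁻¹ ≤ 1 := by
        rw [inv_le_one_iff₀]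
        right; exact_mod_cast hk1
      have hki0 : (0:ℝ) ≤ (k:ℝ)⁻¹ := by positivity
      rcases Yvec_classify u i with h1 | h1 | ⟨i', h1⟩ <;>
        rcases Yvec_classify v j with h2 | h2 | ⟨j', h2⟩ <;>
        rw [h1, h2] <;>
        simp only [inner_yy hk1, inner_ye hk1, inner_ey hk1, inner_ee hk1,
          inner_zero_left, inner_zero_right, norm_sq_y hk1, norm_sq_e hk1, norm_zero] <;>
        (try split_ifs) <;> linarith
    · -- the objective value
      intro i
      have hye : ‖yvec k i - evec k‖ ^ 2 = 1 - (k:ℝ)⁻¹ := by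
        rw [← real_inner_self_eq_norm_sq]
        simp only [inner_sub_left, inner_sub_right, inner_yy hk1, inner_ye hk1,
          inner_ey hk1, inner_ee hk1]
        norm_num
      have hterm : ∀ a : Fin k, ‖Yvec k none i - Yvec k (some a) i‖ ^ 2
          = (k:ℝ)⁻¹ + (if i = a then 1 - 2 * (k:ℝ)⁻¹ else 0) := by
        intro a
        by_cases h : i = a
        · simp only [Yvec, if_pos h]
          rw [hye]; ring
        · simp only [Yvec, if_neg h, sub_zero]
          rw [norm_sq_y hk1]
          simp
      rw [Finset.sum_congr rfl (fun a _ => hterm a), Finset.sum_add_distrib,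
        Finset.sum_ite_eq, if_pos (Finset.mem_univ i), Finset.sum_const,
        Finset.card_univ, Fintype.card_fin, nsmul_eq_mul]
      field_simp
      ring
end
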